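/- Fix real numbers Ω, γ, ν_p, ν_q and set a = −ν_q − i ν_p. Let Q be the 5×5 complex matrix with rows (−2Ω, γa, 0, 0, 0), (γā, −Ω, (√6/2)γa, 0, 0), (0, (√6/2)γā, 0, (√6/2)γa, 0), (0, 0, (√6/2)γā, Ω, γa), (0, 0, 0, γā, 2Ω), where ā denotes the complex conjugate of a. Then, with λ² = Ω² + γ²(ν_p² + ν_q²), Q satisfies Q⁵ = 5 λ² Q³ − 4 λ⁴ Q. -/
import Mathlib

open Matrix

set_option maxHeartbeats 1600000

/-- The constant coefficient matrix `Q` arising from the Fourier-space form of the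
Laplace–Rotation–SOC subproblem, with `a = -ν_q - i ν_p`. -/
noncomputable def Qmat (Ω γ νp νq : ℝ) : Matrix (Fin 5) (Fin 5) ℂ :=
  let a : ℂ := -(νq : ℂ) - Complex.I * (νp : ℂ)
  !![(-2 * Ω : ℂ), (γ : ℂ) * a, 0, 0, 0;
     (γ : ℂ) * (starRingEnd ℂ a), (-Ω : ℂ), ((Real.sqrt 6 : ℂ) / 2) * (γ : ℂ) * a, 0, 0;
     0, ((Real.sqrt 6 : ℂ) / 2) * (γ : ℂ) * (starRingEnd ℂ a), 0,
       ((Real.sqrt 6 : ℂ) / 2) * (γ : ℂ) * a, 0;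
     0, 0, ((Real.sqrt 6 : ℂ) / 2) * (γ : ℂ) * (starRingEnd ℂ a), (Ω : ℂ), (γ : ℂ) * a;
     0, 0, 0, (γ : ℂ) * (starRingEnd ℂ a), (2 * Ω : ℂ)]

noncomputable def Mgen (Ω s z w : ℂ) : Matrix (Fin 5) (Fin 5) ℂ :=
  !![-2*Ω, z, 0, 0, 0;
     w, -Ω, s/2*z, 0, 0;
     0, s/2*w, 0, s/2*z, 0;
     0, 0, s/2*w, Ω, z;
     0, 0, 0, w, 2*Ω]

noncomputable def Mg2 (Ω s z w : ℂ) : Matrix (Fin 5) (Fin 5) ℂ :=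
  !![(z*w + 4*Ω^2), (-3*Ω*z), ((1/2)*s*z^2), (0:ℂ), (0:ℂ);
     (-3*Ω*w), (z*w + (1/4)*s^2*z*w + Ω^2), ((-1/2)*Ω*s*z), ((1/4)*s^2*z^2), (0:ℂ);
     ((1/2)*s*w^2), ((-1/2)*Ω*s*w), ((1/2)*s^2*z*w), ((1/2)*Ω*s*z), ((1/2)*s*z^2);
     (0:ℂ), ((1/4)*s^2*w^2), ((1/2)*Ω*s*w), (z*w + (1/4)*s^2*z*w + Ω^2), (3*Ω*z);
     (0:ℂ), (0:ℂ), ((1/2)*s*w^2), (3*Ω*w), (z*w + 4*Ω^2)]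

noncomputable def Mg3 (Ω s z w : ℂ) : Matrix (Fin 5) (Fin 5) ℂ :=
  !![(-5*Ω*z*w + -8*Ω^3), (z^2*w + (1/4)*s^2*z^2*w + 7*Ω^2*z), ((-3/2)*Ω*s*z^2), ((1/4)*s^2*z^3), (0:ℂ);
     (z*w^2 + (1/4)*s^2*z*w^2 + 7*Ω^2*w), (-4*Ω*z*w + (-1/2)*Ω*s^2*z*w + -1*Ω^3), ((1/2)*s*z^2*w + (1/4)*s^3*z^2*w + (1/2)*Ω^2*s*z), (0:ℂ), ((1/4)*s^2*z^3);
     ((-3/2)*Ω*s*w^2), ((1/2)*s*z*w^2 + (1/4)*s^3*z*w^2 + (1/2)*Ω^2*s*w), (0:ℂ), ((1/2)*s*z^2*w + (1/4)*s^3*z^2*w + (1/2)*Ω^2*s*z), ((3/2)*Ω*s*z^2);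
     ((1/4)*s^2*w^3), (0:ℂ), ((1/2)*s*z*w^2 + (1/4)*s^3*z*w^2 + (1/2)*Ω^2*s*w), (4*Ω*z*w + (1/2)*Ω*s^2*z*w + Ω^3), (z^2*w + (1/4)*s^2*z^2*w + 7*Ω^2*z);
     (0:ℂ), ((1/4)*s^2*w^3), ((3/2)*Ω*s*w^2), (z*w^2 + (1/4)*s^2*z*w^2 + 7*Ω^2*w), (5*Ω*z*w + 8*Ω^3)]

noncomputable def Mg5 (Ω s z w : ℂ) : Matrix (Fin 5) (Fin 5) ℂ :=
  !![(-8*Ω*z^2*w^2 + (-3/2)*Ω*s^2*z^2*w^2 + -49*Ω^3*z*w + -32*Ω^5), (z^3*w^2 + (1/2)*s^2*z^3*w^2 + (1/8)*s^4*z^3*w^2 + 23*Ω^2*z^2*w + (11/4)*Ω^2*s^2*z^2*w + 31*Ω^4*z), (-3*Ω*s*z^3*w + (-3/4)*Ω*s^3*z^3*w + (-15/2)*Ω^3*s*z^2), ((1/2)*s^2*z^4*w + (1/8)*s^4*z^4*w + (5/4)*Ω^2*s^2*z^3), (0:ℂ);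
     (z^2*w^3 + (1/2)*s^2*z^2*w^3 + (1/8)*s^4*z^2*w^3 + 23*Ω^2*z*w^2 + (11/4)*Ω^2*s^2*z*w^2 + 31*Ω^4*w), (-7*Ω*z^2*w^2 + (-5/2)*Ω*s^2*z^2*w^2 + (-1/4)*Ω*s^4*z^2*w^2 + -26*Ω^3*z*w + -1*Ω^3*s^2*z*w + -1*Ω^5), ((1/2)*s*z^3*w^2 + (1/2)*s^3*z^3*w^2 + (1/8)*s^5*z^3*w^2 + (11/2)*Ω^2*s*z^2*w + (1/2)*Ω^2*s^3*z^2*w + (1/2)*Ω^4*s*z), (0:ℂ), ((1/2)*s^2*z^4*w + (1/8)*s^4*z^4*w + (5/4)*Ω^2*s^2*z^3);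
     (-3*Ω*s*z*w^3 + (-3/4)*Ω*s^3*z*w^3 + (-15/2)*Ω^3*s*w^2), ((1/2)*s*z^2*w^3 + (1/2)*s^3*z^2*w^3 + (1/8)*s^5*z^2*w^3 + (11/2)*Ω^2*s*z*w^2 + (1/2)*Ω^2*s^3*z*w^2 + (1/2)*Ω^4*s*w), (0:ℂ), ((1/2)*s*z^3*w^2 + (1/2)*s^3*z^3*w^2 + (1/8)*s^5*z^3*w^2 + (11/2)*Ω^2*s*z^2*w + (1/2)*Ω^2*s^3*z^2*w + (1/2)*Ω^4*s*z), (3*Ω*s*z^3*w + (3/4)*Ω*s^3*z^3*w + (15/2)*Ω^3*s*z^2);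
     ((1/2)*s^2*z*w^4 + (1/8)*s^4*z*w^4 + (5/4)*Ω^2*s^2*w^3), (0:ℂ), ((1/2)*s*z^2*w^3 + (1/2)*s^3*z^2*w^3 + (1/8)*s^5*z^2*w^3 + (11/2)*Ω^2*s*z*w^2 + (1/2)*Ω^2*s^3*z*w^2 + (1/2)*Ω^4*s*w), (7*Ω*z^2*w^2 + (5/2)*Ω*s^2*z^2*w^2 + (1/4)*Ω*s^4*z^2*w^2 + 26*Ω^3*z*w + Ω^3*s^2*z*w + Ω^5), (z^3*w^2 + (1/2)*s^2*z^3*w^2 + (1/8)*s^4*z^3*w^2 + 23*Ω^2*z^2*w + (11/4)*Ω^2*s^2*z^2*w + 31*Ω^4*z);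
     (0:ℂ), ((1/2)*s^2*z*w^4 + (1/8)*s^4*z*w^4 + (5/4)*Ω^2*s^2*w^3), (3*Ω*s*z*w^3 + (3/4)*Ω*s^3*z*w^3 + (15/2)*Ω^3*s*w^2), (z^2*w^3 + (1/2)*s^2*z^2*w^3 + (1/8)*s^4*z^2*w^3 + 23*Ω^2*z*w^2 + (11/4)*Ω^2*s^2*z*w^2 + 31*Ω^4*w), (8*Ω*z^2*w^2 + (3/2)*Ω*s^2*z^2*w^2 + 49*Ω^3*z*w + 32*Ω^5)]


lemma Mgen_sq (Ω s z w : ℂ) : Mgen Ω s z w * Mgen Ω s z w = Mg2 Ω s z w := by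
  ext i j
  fin_cases i <;> fin_cases j <;>
    (simp [Mgen, Mg2, Matrix.mul_apply, Fin.sum_univ_five,
      Matrix.vecHead, Matrix.vecTail]; try ring)

lemma Mgen_cube (Ω s z w : ℂ) : Mg2 Ω s z w * Mgen Ω s z w = Mg3 Ω s z w := by
  ext i j
  fin_cases i <;> fin_cases j <;>
    (simp [Mgen, Mg2, Mg3, Matrix.mul_apply, Fin.sum_univ_five,
      Matrix.vecHead, Matrix.vecTail]; try ring)

lemma Mgen_five (Ω s z w : ℂ) : Mg3 Ω s z w * Mg2 Ω s z w = Mg5 Ω s z w := by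
  ext i j
  fin_cases i <;> fin_cases j <;>
    (simp [Mg2, Mg3, Mg5, Matrix.mul_apply, Fin.sum_univ_five,
      Matrix.vecHead, Matrix.vecTail]; try ring)

lemma key (Ω s z w : ℂ) (hs : s^2 = 6) :
    Mgen Ω s z w ^ 5 = (5*(Ω^2 + z*w)) • Mgen Ω s z w ^ 3
      - (4*(Ω^2 + z*w)^2) • Mgen Ω s z w := by
  have h3 : s^3 = 6*s := by rw [pow_succ, hs]
  have h4 : s^4 = 36 := by rw [show (4:ℕ)=2+2 from rfl, pow_add, hs]; norm_num
  have h5 : s^5 = 36*s := by rw [pow_succ, h4]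
  have e2 : Mgen Ω s z w ^ 2 = Mg2 Ω s z w := by rw [pow_two, Mgen_sq]
  have e3 : Mgen Ω s z w ^ 3 = Mg3 Ω s z w := by
    rw [pow_succ, e2, Mgen_cube]
  have e5 : Mgen Ω s z w ^ 5 = Mg5 Ω s z w := by
    have h : Mgen Ω s z w ^ 5 = Mgen Ω s z w ^ 3 * Mgen Ω s z w ^ 2 := by
      rw [← pow_add]
    rw [h, e2, e3, Mgen_five]
  rw [e3, e5]
  ext i j
  fin_cases i <;> fin_cases j
  all_goals
    simp [Mgen, Mg3, Mg5, Matrix.smul_apply, Matrix.sub_apply,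
      Matrix.vecHead, Matrix.vecTail]
  all_goals ring_nf
  all_goals try simp only [hs, h3, h4, h5]
  all_goals try ring

theorem Qmat_quintic (Ω γ νp νq lam : ℝ)
    (hlam : lam ^ 2 = Ω ^ 2 + γ ^ 2 * (νp ^ 2 + νq ^ 2)) :
    Qmat Ω γ νp νq ^ 5 =
      ((5 * lam ^ 2 : ℝ) : ℂ) • Qmat Ω γ νp νq ^ 3
        - ((4 * lam ^ 4 : ℝ) : ℂ) • Qmat Ω γ νp νq := by
  set a : ℂ := -(νq : ℂ) - Complex.I * (νp : ℂ) with ha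
  have hQ : Qmat Ω γ νp νq
      = Mgen (Ω : ℂ) ((Real.sqrt 6 : ℝ) : ℂ) ((γ : ℂ) * a) ((γ : ℂ) * (starRingEnd ℂ a)) := by
    ext i j
    fin_cases i <;> fin_cases j <;>
      (simp [Qmat, Mgen, ha, Matrix.vecHead, Matrix.vecTail]; try ring)
  have hs : ((Real.sqrt 6 : ℝ) : ℂ)^2 = 6 := by
    norm_cast
    rw [sq]
    exact Real.mul_self_sqrt (by norm_num)
  have hconj : starRingEnd ℂ a = -(νq : ℂ) + Complex.I * (νp : ℂ) := by
    rw [ha]; simp [map_sub, Complex.conj_I]; try ring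
  have hL : ((Ω:ℂ)^2 + ((γ : ℂ) * a) * ((γ : ℂ) * (starRingEnd ℂ a)))
      = ((lam^2 : ℝ) : ℂ) := by
    rw [hconj, ha, hlam]
    push_cast
    linear_combination (-1) * (γ:ℂ)^2 * (νp:ℂ)^2 * Complex.I_sq
  have s1 : ((5 * lam^2 : ℝ) : ℂ) = 5 * ((lam^2 : ℝ) : ℂ) := by push_cast; ring
  have s2 : ((4 * lam^4 : ℝ) : ℂ) = 4 * ((lam^2 : ℝ) : ℂ)^2 := by push_cast; ring
  rw [hQ, s1, s2, ← hL]
  exact key _ _ _ _ hs
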